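/- For every signed permutation π ∈ B_n and 1 ≤ k ≤ n, with ψ(π) = (π_1,…,π_k) the standardized interleaved subsequences, the width-k flag descent satisfies fdes_k^B(π) = fdes^B(π_k) + 2 Σ_{i=1}^{k-1} des^A(π_i), where fdes^B(τ) = des^B(τ) + des^A(τ). -/

import Mathlib

open Finset

/-- The value function of the signed permutation determined by `σ` and sign vector `ε`:
`bval n σ ε i` is `π(i)` for `i ∈ {-n,…,n}`, with `π(0) = 0` and `π(-i) = -π(i)`. -/
def bval (n : ℕ) (σ : Equiv.Perm (Fin n)) (ε : Fin n → Bool) : ℤ → ℤ := fun i =>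
  if h : 1 ≤ i.natAbs ∧ i.natAbs ≤ n then
    (Int.sign i) *
      (if ε ⟨i.natAbs - 1, by omega⟩ then -((((σ ⟨i.natAbs - 1, by omega⟩ : Fin n) : ℕ) : ℤ) + 1)
       else (((σ ⟨i.natAbs - 1, by omega⟩ : Fin n) : ℕ) : ℤ) + 1)
  else 0

/-- width-`k` type-B descent number: `#{0 ≤ i ≤ n-k : π(i) > π(i+k)}`, `π(0)=0`. -/
def desB (n k : ℕ) (π : ℤ → ℤ) : ℕ :=
  ((range (n - k + 1)).filter fun i : ℕ => π i > π ((i : ℤ) + k)).card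

/-- width-`k` type-A descent number: `#{1 ≤ i ≤ n-k : π(i) > π(i+k)}`. -/
def desA (n k : ℕ) (π : ℤ → ℤ) : ℕ :=
  ((Icc 1 (n - k)).filter fun i : ℕ => π i > π ((i : ℤ) + k)).card

/-- width-`k` negative descent number: `#{1 ≤ i ≤ n-k : π(-i) > π(i+k)}`. -/
def ndesB (n k : ℕ) (π : ℤ → ℤ) : ℕ :=
  ((Icc 1 (n - k)).filter fun i : ℕ => π (-(i : ℤ)) > π ((i : ℤ) + k)).card

/-- width-`k` inversion number: pairs `i < j` in `[n]` with `j - i` a positive multiple of `k`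
and `π(i) > π(j)`. -/
def invAk (n k : ℕ) (π : ℤ → ℤ) : ℕ :=
  (((Icc 1 n) ×ˢ (Icc 1 n)).filter fun p : ℕ × ℕ =>
    p.1 < p.2 ∧ k ∣ (p.2 - p.1) ∧ π p.1 > π p.2).card

/-- width-`k` negative-entry statistic: `#{1 ≤ i ≤ ⌊n/k⌋ : π(ik) < 0}`. -/
def negk (n k : ℕ) (π : ℤ → ℤ) : ℕ :=
  ((Icc 1 (n / k)).filter fun i : ℕ => π ((i : ℤ) * k) < 0).card

/-- width-`k` negative-sum-pair statistic. -/
def nspk (n k : ℕ) (π : ℤ → ℤ) : ℕ :=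
  (((Icc 1 n) ×ˢ (Icc 1 n)).filter fun p : ℕ × ℕ =>
    p.1 < p.2 ∧ k ∣ (p.2 - p.1) ∧ π p.1 + π p.2 < 0).card

/-- width-`k` type-B inversion number. -/
def invBk (n k : ℕ) (π : ℤ → ℤ) : ℕ := invAk n k π + negk n k π + nspk n k π

/-- Length of the `i`-th interleaved subsequence (positions `i, i+k, …` in `[n]`). -/
def subLen (n k i : ℕ) : ℕ := (n - i) / k + 1

/-- The standardization `std γ_{n,k}^i(π)` of the `i`-th interleaved subsequence of `π`,
as a value function: the `m`-th entry (for `1 ≤ m ≤ subLen n k i`) is the sign of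
`π(i + (m-1)k)` times the rank of its absolute value among the subsequence. -/
def stdSub (n k i : ℕ) (π : ℤ → ℤ) : ℤ → ℤ := fun m =>
  if 1 ≤ m ∧ m ≤ (subLen n k i : ℤ) then
    (π ((i : ℤ) + (m - 1) * k)).sign *
      (1 + (((Finset.Icc 1 (subLen n k i)).filter fun m' : ℕ =>
        |π ((i : ℤ) + ((m' : ℤ) - 1) * k)| < |π ((i : ℤ) + (m - 1) * k)|).card : ℤ))
  else 0

section Aux

variable (n : ℕ) (σ : Equiv.Perm (Fin n)) (ε : Fin n → Bool)

lemma bval_zero : bval n σ ε 0 = 0 := by simp [bval]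

lemma bval_eq (p : ℕ) (h1 : 1 ≤ p) (h2 : p ≤ n) :
    bval n σ ε p = (if ε ⟨p-1, by omega⟩ then -((((σ ⟨p-1, by omega⟩ : Fin n) : ℕ) : ℤ) + 1)
       else (((σ ⟨p-1, by omega⟩ : Fin n) : ℕ) : ℤ) + 1) := by
  have hs : ((p:ℤ)).sign = 1 := Int.sign_eq_one_iff_pos.mpr (by exact_mod_cast h1)
  simp only [bval, Int.natAbs_natCast, hs, one_mul]
  rw [dif_pos ⟨h1, h2⟩]

lemma bval_abs (p : ℕ) (h1 : 1 ≤ p) (h2 : p ≤ n) :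
    |bval n σ ε p| = (((σ ⟨p-1, by omega⟩ : Fin n) : ℕ) : ℤ) + 1 := by
  rw [bval_eq n σ ε p h1 h2]
  split
  · rw [abs_neg, abs_of_pos (by positivity)]
  · rw [abs_of_pos (by positivity)]

lemma bval_ne (p : ℕ) (h1 : 1 ≤ p) (h2 : p ≤ n) : bval n σ ε p ≠ 0 := by
  intro h
  have := bval_abs n σ ε p h1 h2
  rw [h] at this; simp at this; omega

lemma bval_abs_inj (p q : ℕ) (hp1 : 1 ≤ p) (hp2 : p ≤ n) (hq1 : 1 ≤ q) (hq2 : q ≤ n)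
    (h : |bval n σ ε p| = |bval n σ ε q|) : p = q := by
  rw [bval_abs n σ ε p hp1 hp2, bval_abs n σ ε q hq1 hq2] at h
  have h2 : σ ⟨p-1, by omega⟩ = σ ⟨q-1, by omega⟩ := by
    apply Fin.ext
    have h' := add_right_cancel h
    exact_mod_cast h'
  have h3 := σ.injective h2
  have h4 : p - 1 = q - 1 := congrArg Fin.val h3
  omega

lemma sign_rank_lt {x y : ℤ} (hx : x ≠ 0) (hy : y ≠ 0) {cx cy : ℕ}
    (h1 : (|x| < |y| ↔ cx < cy)) (h2 : (|y| < |x| ↔ cy < cx)) (hne : |x| ≠ |y|) :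
    (y < x ↔ y.sign * (1 + (cy:ℤ)) < x.sign * (1 + (cx:ℤ))) := by
  rcases hx.lt_or_gt with hx' | hx' <;> rcases hy.lt_or_gt with hy' | hy'
  · rw [abs_of_neg hx', abs_of_neg hy'] at h1 h2 hne
    rw [Int.sign_eq_neg_one_of_neg hx', Int.sign_eq_neg_one_of_neg hy']
    omega
  · rw [abs_of_neg hx', abs_of_pos hy'] at h1 h2 hne
    rw [Int.sign_eq_neg_one_of_neg hx', Int.sign_eq_one_of_pos hy']
    omega
  · rw [abs_of_pos hx', abs_of_neg hy'] at h1 h2 hne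
    rw [Int.sign_eq_one_of_pos hx', Int.sign_eq_neg_one_of_neg hy']
    omega
  · rw [abs_of_pos hy', abs_of_pos hx'] at h1 h2 hne
    rw [Int.sign_eq_one_of_pos hx', Int.sign_eq_one_of_pos hy']
    omega



lemma pos_bound (k r j : ℕ) (hk : 1 ≤ k) (hr1 : 1 ≤ r) (hrn : r ≤ n)
    (hj1 : 1 ≤ j) (hj2 : j ≤ subLen n k r) : 1 ≤ r + (j-1)*k ∧ r + (j-1)*k ≤ n := by
  have h := (Nat.le_div_iff_mul_le (by omega : 0 < k)).mp (by unfold subLen at hj2; omega : j - 1 ≤ (n - r)/k)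
  omega

lemma pos_cast (k r j : ℕ) (hj1 : 1 ≤ j) :
    ((r:ℤ) + ((j:ℤ)-1)*k) = ((r + (j-1)*k : ℕ) : ℤ) := by
  push_cast [Nat.cast_sub hj1]
  ring

lemma stdSub_apply (k r : ℕ) (π : ℤ → ℤ) (j : ℕ) (h1 : 1 ≤ j) (h2 : j ≤ subLen n k r) :
    stdSub n k r π (j:ℤ) = (π ((r:ℤ)+((j:ℤ)-1)*k)).sign *
      (1 + (((Finset.Icc 1 (subLen n k r)).filter fun m' : ℕ =>
        |π ((r:ℤ)+((m':ℤ)-1)*k)| < |π ((r:ℤ)+((j:ℤ)-1)*k)|).card : ℤ)) := by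
  unfold stdSub
  rw [if_pos ⟨by exact_mod_cast h1, by exact_mod_cast h2⟩]

lemma std_step (k r m : ℕ) (hk : 1 ≤ k) (hr1 : 1 ≤ r) (hrn : r ≤ n)
    (hm1 : 1 ≤ m) (hm : m + 1 ≤ subLen n k r) :
    (stdSub n k r (bval n σ ε) ((m:ℤ) + 1) < stdSub n k r (bval n σ ε) (m:ℤ)) ↔
      (bval n σ ε ((r + m*k : ℕ) : ℤ) < bval n σ ε ((r + (m-1)*k : ℕ) : ℤ)) := by
  set π := bval n σ ε with hπ
  set L := subLen n k r with hL
  have ecast : ((m:ℤ) + 1) = (((m+1 : ℕ)) : ℤ) := by push_cast; ring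
  rw [ecast, stdSub_apply n k r π (m+1) (by omega) hm, stdSub_apply n k r π m hm1 (by omega)]
  -- abbreviations
  set A : ℕ → ℤ := fun j => |π ((r:ℤ) + ((j:ℤ)-1)*(k:ℤ))| with hA
  set c : ℕ → ℕ := fun j => ((Icc 1 L).filter fun m' => A m' < A j).card with hc
  have hposval : ∀ j, 1 ≤ j → j ≤ L → A j = |π ((r + (j-1)*k : ℕ) : ℤ)| := by
    intro j h1 h2; rw [hA]; simp only []; rw [pos_cast k r j h1]
  have hinj : ∀ j ∈ Icc 1 L, ∀ j' ∈ Icc 1 L, A j = A j' → j = j' := by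
    intro j hj j' hj'
    simp only [mem_Icc] at hj hj'
    rw [hposval j hj.1 hj.2, hposval j' hj'.1 hj'.2]
    intro h
    have b1 := pos_bound n k r j hk hr1 hrn hj.1 hj.2
    have b2 := pos_bound n k r j' hk hr1 hrn hj'.1 hj'.2
    have heq := bval_abs_inj n σ ε _ _ b1.1 b1.2 b2.1 b2.2 h
    have hk' : 0 < k := hk
    have : (j-1)*k = (j'-1)*k := by omega
    have := Nat.eq_of_mul_eq_mul_right hk' this
    omega
  have hdir : ∀ j ∈ Icc 1 L, ∀ j' ∈ Icc 1 L, A j < A j' → c j < c j' := by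
    intro j hj j' hj' h
    apply Finset.card_lt_card
    have hsub : (Icc 1 L).filter (fun m' => A m' < A j) ⊆ (Icc 1 L).filter (fun m' => A m' < A j') := by
      intro x hx
      simp only [Finset.mem_filter] at hx ⊢
      exact ⟨hx.1, hx.2.trans h⟩
    rw [Finset.ssubset_iff_of_subset hsub]
    exact ⟨j, Finset.mem_filter.mpr ⟨hj, h⟩, by simp⟩
  have hmono : ∀ j ∈ Icc 1 L, ∀ j' ∈ Icc 1 L, (A j < A j' ↔ c j < c j') := by
    intro j hj j' hj'
    refine ⟨hdir j hj j' hj', ?_⟩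
    intro hcc
    by_contra hnot
    push_neg at hnot
    rcases eq_or_lt_of_le hnot with he | hlt
    · have := hinj j' hj' j hj he
      subst this
      omega
    · have := hdir j' hj' j hj hlt
      omega
  -- now apply sign_rank_lt
  have hne : A m ≠ A (m+1) := fun h => by
    have := hinj m (by simp [mem_Icc]; omega) (m+1) (by simp [mem_Icc]; omega) h
    omega
  have b1 := pos_bound n k r m hk hr1 hrn hm1 (by omega)
  have b2 := pos_bound n k r (m+1) hk hr1 hrn (by omega) hm
  have key := sign_rank_lt (x := π ((r:ℤ) + ((m:ℤ)-1)*(k:ℤ))) (y := π ((r:ℤ) + (((m+1:ℕ):ℤ)-1)*(k:ℤ)))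
    (cx := c m) (cy := c (m+1)) ?_ ?_ ?_ ?_ ?_
  · rw [show ((r + m*k : ℕ):ℤ) = (r:ℤ)+(((m+1:ℕ):ℤ)-1)*(k:ℤ) by push_cast; ring,
       show ((r + (m-1)*k : ℕ):ℤ) = (r:ℤ)+((m:ℤ)-1)*(k:ℤ) from (pos_cast k r m hm1).symm]
    exact key.symm
  · rw [pos_cast k r m hm1]
    exact bval_ne n σ ε _ b1.1 b1.2
  · rw [pos_cast k r (m+1) (by omega)]
    exact bval_ne n σ ε _ b2.1 b2.2
  · exact hmono m (by simp [mem_Icc]; omega) (m+1) (by simp [mem_Icc]; omega)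
  · exact hmono (m+1) (by simp [mem_Icc]; omega) m (by simp [mem_Icc]; omega)
  · exact hne



lemma desA_decomp (k : ℕ) (hk : 1 ≤ k) (hkn : k ≤ n) :
    desA n k (bval n σ ε) = ∑ r ∈ Icc 1 k, desA (subLen n k r) 1 (stdSub n k r (bval n σ ε)) := by
  set π := bval n σ ε with hπ
  unfold desA
  rw [Finset.card_eq_sum_card_fiberwise (f := fun i => (i-1) % k + 1) (t := Icc 1 k)
    (fun x _ => by
      have := Nat.mod_lt (x-1) (show 0 < k by omega)
      simp [mem_Icc]; omega)]
  apply Finset.sum_congr rfl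
  intro r hr
  simp only [mem_Icc] at hr
  apply Finset.card_nbij' (i := fun i => (i-1)/k + 1) (j := fun m => r + (m-1)*k)
  · -- forward membership
    intro x hx
    simp only [Finset.mem_coe, Finset.mem_filter, mem_Icc] at hx ⊢
    obtain ⟨⟨⟨hx1, hx2⟩, hdes⟩, hres⟩ := hx
    have hkpos : 0 < k := hk
    have hmodlt := Nat.mod_lt (x-1) hkpos
    have hmod : (x-1) % k = r - 1 := by omega
    have hdm := Nat.div_add_mod (x-1) k
    have hm2 : (x-1)/k + 1 ≤ (n - r)/k := by
      rw [Nat.le_div_iff_mul_le hkpos]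
      have h1 : ((x-1)/k+1)*k = k*((x-1)/k) + k := by ring
      omega
    obtain ⟨q, hq⟩ : ∃ q, (x-1)/k = q := ⟨_, rfl⟩
    obtain ⟨D, hD⟩ : ∃ D, (n-r)/k = D := ⟨_, rfl⟩
    rw [hq] at hdm hm2
    rw [hD] at hm2
    rw [hq]
    have hsub : subLen n k r = D + 1 := by unfold subLen; rw [hD]
    have hqk : q*k = k*q := mul_comm q k
    have hxq : x = k*q + r := by omega
    refine ⟨⟨by omega, by rw [hsub]; omega⟩, ?_⟩
    have hstep := std_step n σ ε k r (q+1) hk (by omega) (by omega) (by omega)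
      (by rw [hsub]; omega)
    rw [show (q+1-1 : ℕ) = q by omega] at hstep
    rw [hπ, show ((1:ℕ):ℤ) = 1 from Nat.cast_one]
    rw [GT.gt, hstep]
    have hqk2 : (q+1)*k = q*k + k := by ring
    rw [show (r + (q+1)*k : ℕ) = x + k by omega, show (r + q*k : ℕ) = x by omega]
    rw [show ((x + k : ℕ):ℤ) = (x:ℤ) + (k:ℤ) by push_cast; ring]
    rw [hπ] at hdes
    exact hdes
  · -- backward membership
    intro m hm
    simp only [Finset.mem_coe, Finset.mem_filter, mem_Icc] at hm ⊢
    obtain ⟨⟨hm1, hm2⟩, hdes⟩ := hm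
    have hkpos : 0 < k := hk
    have hsub : subLen n k r = (n-r)/k + 1 := rfl
    have hLk : m ≤ (n-r)/k := by rw [hsub] at hm2; omega
    have hmul := (Nat.le_div_iff_mul_le hkpos).mp hLk
    have hx2 : r + (m-1)*k ≤ n - k := by
      have h1 : m*k = (m-1)*k + k := by
        have h2 : m = (m-1)+1 := by omega
        calc m*k = ((m-1)+1)*k := by rw [← h2]
        _ = (m-1)*k + k := by ring
      omega
    refine ⟨⟨⟨by omega, hx2⟩, ?_⟩, ?_⟩
    · rw [show ((r + (m-1)*k : ℕ) : ℤ) + (k:ℤ) = ((r + m*k : ℕ) : ℤ) by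
        push_cast [Nat.cast_sub hm1]; ring]
      have hstep := std_step n σ ε k r m hk (by omega) (by omega) hm1
        (by rw [hsub]; omega)
      rw [hπ, GT.gt, ← hstep]
      rw [hπ, show ((1:ℕ):ℤ) = 1 from Nat.cast_one] at hdes
      exact hdes
    · rw [show (r + (m-1)*k) - 1 = (r-1) + (m-1)*k by omega,
        Nat.add_mul_mod_self_right, Nat.mod_eq_of_lt (by omega)]
      omega
  · -- left inverse
    intro x hx
    simp only [Finset.mem_coe, Finset.mem_filter, mem_Icc] at hx
    obtain ⟨⟨⟨hx1, hx2⟩, hdes⟩, hres⟩ := hx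
    have hkpos : 0 < k := hk
    have hmodlt := Nat.mod_lt (x-1) hkpos
    have hdm := Nat.div_add_mod (x-1) k
    obtain ⟨q, hq⟩ : ∃ q, (x-1)/k = q := ⟨_, rfl⟩
    rw [hq] at hdm
    beta_reduce
    rw [hq]
    have hqk : q*k = k*q := mul_comm q k
    simp only [Nat.add_sub_cancel]
    omega
  · -- right inverse
    intro m hm
    simp only [Finset.mem_coe, Finset.mem_filter, mem_Icc] at hm
    obtain ⟨⟨hm1, hm2⟩, _⟩ := hm
    beta_reduce
    rw [show (r + (m-1)*k) - 1 = (r-1) + (m-1)*k by omega,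
      Nat.add_mul_div_right _ _ (show 0 < k by omega), Nat.div_eq_of_lt (by omega)]
    omega

lemma desB_eq (N K : ℕ) (π : ℤ → ℤ) (h0 : π 0 = 0) :
    desB N K π = desA N K π + (if π (K:ℤ) < 0 then 1 else 0) := by
  unfold desB desA
  have hset : range (N - K + 1) = insert 0 (Icc 1 (N-K)) := by
    ext x; simp only [mem_range, mem_insert, mem_Icc]; omega
  have hcond : (π ((0:ℕ):ℤ) > π (((0:ℕ):ℤ) + (K:ℤ))) ↔ π (K:ℤ) < 0 := by
    rw [show ((0:ℕ):ℤ) = 0 from rfl, h0, zero_add]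
  rw [hset, filter_insert]
  by_cases hπK : π (K:ℤ) < 0
  · rw [if_pos (hcond.mpr hπK), if_pos hπK,
      card_insert_of_notMem (by simp [mem_Icc])]
  · rw [if_neg (fun h => hπK (hcond.mp h)), if_neg hπK]
    omega

lemma stdSub_zero (k r : ℕ) (π : ℤ → ℤ) : stdSub n k r π 0 = 0 := by
  unfold stdSub
  rw [if_neg]
  simp

lemma stdSub_k_neg_iff (k : ℕ) (hk : 1 ≤ k) (hkn : k ≤ n) :
    (stdSub n k k (bval n σ ε) ((1:ℕ):ℤ) < 0) ↔ bval n σ ε (k:ℤ) < 0 := by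
  have hL : 1 ≤ subLen n k k := Nat.le_add_left 1 _
  rw [stdSub_apply n k k (bval n σ ε) 1 le_rfl hL]
  have hpos : ((k:ℤ) + (((1:ℕ):ℤ)-1)*(k:ℤ)) = ((k:ℕ):ℤ) := by push_cast; ring
  rw [hpos]
  have hne := bval_ne n σ ε k hk hkn
  rw [show ((k:ℕ):ℤ) = (k:ℤ) from rfl] at *
  rcases hne.lt_or_gt with h | h
  · rw [Int.sign_eq_neg_one_of_neg h]
    constructor
    · intro _; exact h
    · intro _
      have : (0:ℤ) ≤ (((Finset.Icc 1 (subLen n k k)).filter fun m' : ℕ =>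
        |bval n σ ε ((k:ℤ)+((m':ℤ)-1)*k)| < |bval n σ ε ((k:ℤ)+(((1:ℕ):ℤ)-1)*k)|).card : ℤ) := by positivity
      omega
  · rw [Int.sign_eq_one_of_pos h]
    constructor
    · intro hlt
      exfalso
      have : (0:ℤ) ≤ (((Finset.Icc 1 (subLen n k k)).filter fun m' : ℕ =>
        |bval n σ ε ((k:ℤ)+((m':ℤ)-1)*k)| < |bval n σ ε ((k:ℤ)+(((1:ℕ):ℤ)-1)*k)|).card : ℤ) := by positivity
      omega
    · intro hlt; omega

end Aux

/-- decomposition of the width-`k` flag descent: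
`fdes_k^B(π) = fdes^B(π_k) + 2 Σ_{i=1}^{k-1} des^A(π_i)`, where
`fdes^B(τ) = des^B(τ) + des^A(τ)` and `fdes_k^B = des_k^A + des_k^B`. -/
theorem stmt19 (n k : ℕ) (hk : 1 ≤ k) (hkn : k ≤ n)
    (σ : Equiv.Perm (Fin n)) (ε : Fin n → Bool) :
    desA n k (bval n σ ε) + desB n k (bval n σ ε) =
      (desB (subLen n k k) 1 (stdSub n k k (bval n σ ε)) +
        desA (subLen n k k) 1 (stdSub n k k (bval n σ ε))) +
        2 * ∑ i ∈ Finset.Icc 1 (k - 1),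
          desA (subLen n k i) 1 (stdSub n k i (bval n σ ε)) := by
  have h0 : bval n σ ε 0 = 0 := bval_zero n σ ε
  have hstd0 : stdSub n k k (bval n σ ε) 0 = 0 := stdSub_zero n k k _
  rw [desB_eq n k (bval n σ ε) h0,
    desB_eq (subLen n k k) 1 (stdSub n k k (bval n σ ε)) hstd0]
  rw [desA_decomp n σ ε k hk hkn]
  rw [show Icc 1 k = insert k (Icc 1 (k-1)) from by
    ext x; simp only [mem_Icc, mem_insert]; omega]
  rw [Finset.sum_insert (by simp only [mem_Icc]; omega)]
  have hiff := stdSub_k_neg_iff n σ ε k hk hkn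
  simp only [hiff]
  split_ifs with h <;> omega
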